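/- arXiv:math/0104036 — 2 statements merged into one kernel-verified Lean document; each statement's English description precedes it below -/
import Mathlib

section
/- Let m ≥ 1 and let ζ ∈ 𝔽₂^m with c(ζ) = k. If ζ_1 = 1, then there exists γ ∈ Γ_P such that γ(ζ) is the vector whose coordinates equal 1 exactly at the positions 1, 3, 5, …, 2k−1 (i.e. (1,0,1,0,…,1,0,1,0,…,0) with 2k−1 leading alternating entries followed by zeros). If ζ_1 = 0, then there exists γ ∈ Γ_P such that γ(ζ) is the vector whose coordinates equal 1 exactly at the positions 2, 4, …, 2k (i.e. (0,1,0,1,…,0,1,0,…,0) with 2k leading alternating entries followed by zeros). -/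
/-!
The transvections `τ_j`, `j ≥ 2`, fix `ζ_1` and the number of blocks, so it suffices to reach the
normal form inside the orbit. Take a vector of minimal weight `∑ ζ_i 2^i` in the orbit. Each of its
blocks is a single one, for otherwise `τ_j` at the last position `j` of a longer block deletes that
one; and each one at a position `p ≥ 3` has a one at `p - 2`, for otherwise `τ_p τ_{p-1}` moves it
down to `p - 1`. Hence its ones sit at every other position from `1` or `2` up to the last one.
-/

open scoped Classical

noncomputable section

/-- The `i`-th coordinate (1-indexed) of `ζ ∈ 𝔽₂^m`, interpreted as `0` for `i` out of range. -/
def padP {m : ℕ} (ζ : Fin m → ZMod 2) (i : ℕ) : ZMod 2 :=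
  if h : 1 ≤ i ∧ i ≤ m then ζ ⟨i - 1, by omega⟩ else 0

/-- The transvection `τ^P_j(ζ) = ζ + (ζ_{j-1} + ζ_{j+1}) e_j`. -/
def tauP (m j : ℕ) (ζ : Fin m → ZMod 2) : Fin m → ZMod 2 :=
  fun k => if (k : ℕ) + 1 = j then ζ k + (padP ζ (j - 1) + padP ζ (j + 1)) else ζ k

/-- The group `Γ_P`, generated by the transvections `τ^P_j`, `2 ≤ j ≤ m`. -/
def GammaP (m : ℕ) : Subgroup (Equiv.Perm (Fin m → ZMod 2)) :=
  Subgroup.closure {g | ∃ j, 2 ≤ j ∧ j ≤ m ∧ ⇑g = tauP m j}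
def blockCount {m : ℕ} (ζ : Fin m → ZMod 2) : ℕ :=
  ((Finset.Icc 1 m).filter (fun i => padP ζ i = 1 ∧ padP ζ (i - 1) = 0)).card

lemma ZMod.two_eq_zero_iff_ne_one {x : ZMod 2} : x = 0 ↔ x ≠ 1 := by
  revert x; decide

lemma ZMod.two_add_eq_one_of_ne {x y : ZMod 2} (h : x ≠ y) : x + y = 1 := by
  revert x y; decide

lemma Finset.sum_eq_sum_of_eq_off_pair {ι M : Type*} [DecidableEq ι] [AddCommMonoid M]
    {s : Finset ι} {f g : ι → M} {a b : ι} (hab : a ≠ b) (ha : a ∈ s) (hb : b ∈ s)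
    (hfg : ∀ i ∈ s, i ≠ a → i ≠ b → f i = g i) (hpair : f a + f b = g a + g b) :
    ∑ i ∈ s, f i = ∑ i ∈ s, g i := by
  have hsub : {a, b} ⊆ s := Finset.insert_subset ha (Finset.singleton_subset_iff.2 hb)
  rw [← Finset.sum_sdiff hsub, ← Finset.sum_sdiff (f := g) hsub, Finset.sum_pair hab,
    Finset.sum_pair hab, hpair]
  congr 1
  refine Finset.sum_congr rfl fun i hi => ?_
  simp only [Finset.mem_sdiff, Finset.mem_insert, Finset.mem_singleton, not_or] at hi
  exact hfg i hi.1 hi.2.1 hi.2.2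

variable {m : ℕ}

lemma padP_coe_add_one (ζ : Fin m → ZMod 2) (p : Fin m) : padP ζ ((p : ℕ) + 1) = ζ p := by
  rw [padP, dif_pos ⟨by omega, p.isLt⟩]
  rfl

lemma padP_of_lt {i : ℕ} (ζ : Fin m → ZMod 2) (h : m < i) : padP ζ i = 0 := by
  rw [padP, dif_neg (by omega)]

lemma mem_Icc_of_padP_eq_one {ζ : Fin m → ZMod 2} {i : ℕ} (h : padP ζ i = 1) : 1 ≤ i ∧ i ≤ m := by
  by_contra hi
  rw [padP, dif_neg hi] at h
  exact zero_ne_one h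

lemma padP_tauP_of_ne {j i : ℕ} (ζ : Fin m → ZMod 2) (h : i ≠ j) :
    padP (tauP m j ζ) i = padP ζ i := by
  unfold padP
  split_ifs
  · exact if_neg (by simp only; omega)
  · rfl

lemma padP_tauP_self {j : ℕ} (ζ : Fin m → ZMod 2) (hj : 1 ≤ j) (hjm : j ≤ m) :
    padP (tauP m j ζ) j = padP ζ j + (padP ζ (j - 1) + padP ζ (j + 1)) := by
  unfold padP
  rw [dif_pos ⟨hj, hjm⟩, dif_pos ⟨hj, hjm⟩]
  exact if_pos (by simp only; omega)

lemma tauP_involutive (m j : ℕ) : Function.Involutive (tauP m j) := by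
  intro ζ
  funext k
  by_cases hk : (k : ℕ) + 1 = j
  · have h : tauP m j (tauP m j ζ) k
        = tauP m j ζ k + (padP (tauP m j ζ) (j - 1) + padP (tauP m j ζ) (j + 1)) := if_pos hk
    rw [h, padP_tauP_of_ne ζ (by omega), padP_tauP_of_ne ζ (by omega), tauP, if_pos hk, add_assoc,
      CharTwo.add_self_eq_zero, add_zero]
  · exact (if_neg hk).trans (if_neg hk)

lemma tauP_mem_GammaP {j : ℕ} (hj : 2 ≤ j) (hjm : j ≤ m) :
    (tauP_involutive m j).toPerm _ ∈ GammaP m :=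
  Subgroup.subset_closure ⟨j, hj, hjm, rfl⟩

lemma apply_of_mem_GammaP {α : Type*} (F : (Fin m → ZMod 2) → α)
    (hF : ∀ j, 2 ≤ j → j ≤ m → ∀ ζ, F (tauP m j ζ) = F ζ) {g : Equiv.Perm (Fin m → ZMod 2)}
    (hg : g ∈ GammaP m) (ζ : Fin m → ZMod 2) : F (g ζ) = F ζ := by
  induction hg using Subgroup.closure_induction generalizing ζ with
  | mem g hg =>
    obtain ⟨j, hj, hjm, hgj⟩ := hg
    rw [hgj, hF j hj hjm]
  | one => rfl
  | mul g h _ _ hg hh => rw [Equiv.Perm.mul_apply, hg, hh]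
  | inv g _ hg =>
    rw [← hg (g⁻¹ ζ)]
    exact congrArg F (g.apply_symm_apply ζ)

-- Summing up to `m + 1` keeps the block start `j + 1` in range when `j = m`.
lemma blockCount_eq_sum (ζ : Fin m → ZMod 2) :
    blockCount ζ = ∑ i ∈ Finset.Icc 1 (m + 1),
      if padP ζ i = 1 ∧ padP ζ (i - 1) = 0 then 1 else 0 := by
  rw [blockCount, Finset.card_filter]
  refine Finset.sum_subset (Finset.Icc_subset_Icc_right (by omega)) fun i hi him => ?_
  rw [padP_of_lt ζ (by simp only [Finset.mem_Icc] at hi him; omega)]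
  simp

lemma blockCount_tauP {j : ℕ} (ζ : Fin m → ZMod 2) (hj : 2 ≤ j) (hjm : j ≤ m) :
    blockCount (tauP m j ζ) = blockCount ζ := by
  rw [blockCount_eq_sum, blockCount_eq_sum]
  refine Finset.sum_eq_sum_of_eq_off_pair (a := j) (b := j + 1) (by omega)
    (Finset.mem_Icc.2 ⟨by omega, by omega⟩) (Finset.mem_Icc.2 ⟨by omega, by omega⟩)
    (fun i hi hij hij1 => ?_) ?_
  · simp only [Finset.mem_Icc] at hi
    rw [padP_tauP_of_ne ζ hij, padP_tauP_of_ne ζ (by omega)]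
  · rw [Nat.add_sub_cancel, padP_tauP_self ζ (by omega) hjm, padP_tauP_of_ne ζ (by omega),
      padP_tauP_of_ne ζ (by omega)]
    generalize padP ζ (j - 1) = a, padP ζ j = b, padP ζ (j + 1) = c
    revert a b c
    decide

lemma blockCount_apply_of_mem_GammaP {g : Equiv.Perm (Fin m → ZMod 2)} (hg : g ∈ GammaP m)
    (ζ : Fin m → ZMod 2) : blockCount (g ζ) = blockCount ζ :=
  apply_of_mem_GammaP blockCount (fun _ hj hjm ζ => blockCount_tauP ζ hj hjm) hg ζ

lemma padP_one_apply_of_mem_GammaP {g : Equiv.Perm (Fin m → ZMod 2)} (hg : g ∈ GammaP m)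
    (ζ : Fin m → ZMod 2) : padP (g ζ) 1 = padP ζ 1 :=
  apply_of_mem_GammaP (padP · 1) (fun _ hj _ ζ => padP_tauP_of_ne ζ (by omega)) hg ζ

def onePositions (ζ : Fin m → ZMod 2) : Finset ℕ :=
  (Finset.Icc 1 m).filter (fun i => padP ζ i = 1)

lemma mem_onePositions {ζ : Fin m → ZMod 2} {i : ℕ} : i ∈ onePositions ζ ↔ padP ζ i = 1 := by
  rw [onePositions, Finset.mem_filter, Finset.mem_Icc]
  exact ⟨And.right, fun h => ⟨mem_Icc_of_padP_eq_one h, h⟩⟩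

def weight (ζ : Fin m → ZMod 2) : ℕ :=
  ∑ i ∈ onePositions ζ, 2 ^ i

lemma weight_lt_weight {η ζ : Fin m → ZMod 2} {j : ℕ} (hη : padP η j = 0) (hζ : padP ζ j = 1)
    (heq : ∀ i, j < i → padP η i = padP ζ i) : weight η < weight ζ := by
  rw [weight, weight, Finset.geomSum_lt_geomSum_iff_toColex_lt_toColex le_rfl,
    Finset.Colex.toColex_lt_toColex_iff_exists_forall_lt]
  refine ⟨j, mem_onePositions.2 hζ, by simp [mem_onePositions, hη], fun i hiη hiζ => ?_⟩
  rw [mem_onePositions] at hiη hiζ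
  by_contra! hji
  rcases hji.lt_or_eq with hji | rfl
  · exact hiζ (heq i hji ▸ hiη)
  · exact zero_ne_one (hη.symm.trans hiη)

lemma weight_tauP_lt {j : ℕ} {ζ : Fin m → ZMod 2} (hj : padP ζ j = 1)
    (hne : padP ζ (j - 1) ≠ padP ζ (j + 1)) : weight (tauP m j ζ) < weight ζ := by
  obtain ⟨hj1, hjm⟩ := mem_Icc_of_padP_eq_one hj
  refine weight_lt_weight ?_ hj fun i hi => padP_tauP_of_ne ζ (by omega)
  rw [padP_tauP_self ζ hj1 hjm, hj, ZMod.two_add_eq_one_of_ne hne]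
  rfl

/-- On positions `p - 2, …, p + 1`: `(0, 0, 1, 0) ↦ (0, 1, 1, 0) ↦ (0, 1, 0, 0)`. -/
lemma weight_tauP_tauP_lt {p : ℕ} {ζ : Fin m → ZMod 2} (hp : 2 ≤ p) (h₂ : padP ζ (p - 2) = 0)
    (h₁ : padP ζ (p - 1) = 0) (h₀ : padP ζ p = 1) (h₃ : padP ζ (p + 1) = 0) :
    weight (tauP m p (tauP m (p - 1) ζ)) < weight ζ := by
  have hpm := (mem_Icc_of_padP_eq_one h₀).2
  have hp₁ : padP (tauP m (p - 1) ζ) (p - 1) = 1 := by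
    rw [padP_tauP_self ζ (by omega) (by omega), Nat.sub_sub, Nat.sub_add_cancel (by omega), h₁, h₂,
      h₀]
    rfl
  refine weight_lt_weight ?_ h₀ fun i hi => ?_
  · rw [padP_tauP_self _ (by omega) hpm, hp₁, padP_tauP_of_ne ζ (by omega),
      padP_tauP_of_ne ζ (by omega), h₀, h₃]
    rfl
  · rw [padP_tauP_of_ne _ (by omega), padP_tauP_of_ne ζ (by omega)]

lemma padP_add_one_eq_zero {ζ : Fin m → ZMod 2}
    (hA : ∀ j, 2 ≤ j → padP ζ j = 1 → padP ζ (j - 1) = padP ζ (j + 1)) {j : ℕ}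
    (hj : padP ζ j = 1) : padP ζ (j + 1) = 0 := by
  rw [ZMod.two_eq_zero_iff_ne_one]
  intro hj₁
  have hj₀ := (mem_Icc_of_padP_eq_one hj).1
  -- two adjacent ones would propagate up to position `m + 1`
  have hrun : ∀ n, padP ζ (j + n) = 1 ∧ padP ζ (j + n + 1) = 1 := by
    intro n
    induction n with
    | zero => exact ⟨hj, hj₁⟩
    | succ n ih =>
      have h := hA (j + n + 1) (by omega) ih.2
      rw [Nat.add_sub_cancel, ih.1] at h
      exact ⟨ih.2, h.symm⟩
  exact zero_ne_one ((padP_of_lt ζ (by omega)).symm.trans (hrun m).2)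

lemma padP_sub_two_eq_one {ζ : Fin m → ZMod 2}
    (hA : ∀ j, 2 ≤ j → padP ζ j = 1 → padP ζ (j - 1) = padP ζ (j + 1))
    (hB : ∀ p, 3 ≤ p → padP ζ (p - 1) = 0 → padP ζ p = 1 → padP ζ (p + 1) = 0 →
      padP ζ (p - 2) = 1) {p : ℕ} (hp : 3 ≤ p) (h : padP ζ p = 1) : padP ζ (p - 2) = 1 := by
  refine hB p hp (ZMod.two_eq_zero_iff_ne_one.2 fun h₁ => ?_) h (padP_add_one_eq_zero hA h)
  have h₀ := padP_add_one_eq_zero hA h₁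
  rw [Nat.sub_add_cancel (by omega), h] at h₀
  exact one_ne_zero h₀

lemma padP_eq_one_of_le_of_mod_two_eq {ζ : Fin m → ZMod 2}
    (hA : ∀ j, 2 ≤ j → padP ζ j = 1 → padP ζ (j - 1) = padP ζ (j + 1))
    (hB : ∀ p, 3 ≤ p → padP ζ (p - 1) = 0 → padP ζ p = 1 → padP ζ (p + 1) = 0 →
      padP ζ (p - 2) = 1) {p q : ℕ} (hp : padP ζ p = 1) (hq : 1 ≤ q) (hqp : q ≤ p)
    (hpar : q % 2 = p % 2) : padP ζ q = 1 := by
  induction p using Nat.strong_induction_on with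
  | _ p ih =>
    rcases hqp.eq_or_lt with rfl | hlt
    · exact hp
    · exact ih (p - 2) (by omega) (padP_sub_two_eq_one hA hB (by omega) hp) (by omega) (by omega)

lemma exists_padP_eq_one_iff {ζ : Fin m → ZMod 2}
    (hA : ∀ j, 2 ≤ j → padP ζ j = 1 → padP ζ (j - 1) = padP ζ (j + 1))
    (hB : ∀ p, 3 ≤ p → padP ζ (p - 1) = 0 → padP ζ p = 1 → padP ζ (p + 1) = 0 →
      padP ζ (p - 2) = 1) :
    ∃ T ≤ m, ∀ n, padP ζ n = 1 ↔ 1 ≤ n ∧ n ≤ T ∧ n % 2 = T % 2 := by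
  set T := Nat.findGreatest (padP ζ · = 1) m
  have hT : T ≠ 0 → padP ζ T = 1 := Nat.findGreatest_of_ne_zero rfl
  refine ⟨T, Nat.findGreatest_le m, fun n => ⟨fun hn => ?_, fun ⟨hn, hnT, hpar⟩ => ?_⟩⟩
  · obtain ⟨hn₁, hnm⟩ := mem_Icc_of_padP_eq_one hn
    have hnT : n ≤ T := Nat.le_findGreatest hnm hn
    refine ⟨hn₁, hnT, by_contra fun hpar => ?_⟩
    have hn' := padP_eq_one_of_le_of_mod_two_eq hA hB (hT (by omega)) (q := n + 1) (by omega)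
      (by omega) (by omega)
    rw [padP_add_one_eq_zero hA hn] at hn'
    exact zero_ne_one hn'
  · exact padP_eq_one_of_le_of_mod_two_eq hA hB (hT (by omega)) hn hnT hpar

/-- With `b = ζ_1`: ones at `1, 3, …, 2k - 1` if `b = 1`, at `2, 4, …, 2k` if `b = 0`. -/
def normalForm (m b k : ℕ) : Fin m → ZMod 2 :=
  fun p => if ((p : ℕ) + 1) % 2 = b ∧ (p : ℕ) + 1 ≤ 2 * k - b then 1 else 0

lemma blockCount_of_padP_eq_one_iff {ζ : Fin m → ZMod 2} {T : ℕ} (hTm : T ≤ m)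
    (h : ∀ n, padP ζ n = 1 ↔ 1 ≤ n ∧ n ≤ T ∧ n % 2 = T % 2) : blockCount ζ = (T + 1) / 2 := by
  have hblocks : (Finset.Icc 1 m).filter (fun i => padP ζ i = 1 ∧ padP ζ (i - 1) = 0)
      = (Finset.Icc 1 ((T + 1) / 2)).image (fun i => 2 * i - T % 2) := by
    ext n
    simp only [Finset.mem_filter, Finset.mem_Icc, Finset.mem_image, ZMod.two_eq_zero_iff_ne_one,
      ne_eq, h]
    constructor
    · exact fun hn => ⟨(n + T % 2) / 2, by omega, by omega⟩
    · rintro ⟨i, hi, rfl⟩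
      omega
  rw [blockCount, hblocks, Finset.card_image_of_injOn (fun i hi j hj hij => by
    simp only [Finset.coe_Icc, Set.mem_Icc] at hi hj hij; omega), Nat.card_Icc, Nat.add_sub_cancel]

lemma eq_normalForm_of_padP_eq_one_iff {ζ : Fin m → ZMod 2} {T : ℕ} (hTm : T ≤ m)
    (h : ∀ n, padP ζ n = 1 ↔ 1 ≤ n ∧ n ≤ T ∧ n % 2 = T % 2) :
    ζ = normalForm m (padP ζ 1).val (blockCount ζ) := by
  have hb : (padP ζ 1).val = T % 2 := by
    by_cases h₁ : padP ζ 1 = 1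
    · have := (h 1).1 h₁
      rw [h₁]
      show 1 = T % 2
      omega
    · have := mt (h 1).2 h₁
      rw [ZMod.two_eq_zero_iff_ne_one.2 h₁]
      show 0 = T % 2
      omega
  funext p
  rw [normalForm, hb, blockCount_of_padP_eq_one_iff hTm h, ← padP_coe_add_one ζ p]
  by_cases hp : padP ζ (p + 1) = 1
  · have := (h _).1 hp
    rw [hp, if_pos (by omega)]
  · rw [ZMod.two_eq_zero_iff_ne_one.2 hp, if_neg]
    rw [h] at hp
    omega

lemma eq_normalForm_of_forall_weight_le {ζ : Fin m → ZMod 2}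
    (hmin : ∀ g ∈ GammaP m, weight ζ ≤ weight (g ζ)) :
    ζ = normalForm m (padP ζ 1).val (blockCount ζ) := by
  have hA : ∀ j, 2 ≤ j → padP ζ j = 1 → padP ζ (j - 1) = padP ζ (j + 1) := by
    intro j hj h₀
    by_contra hne
    exact (weight_tauP_lt h₀ hne).not_ge
      (hmin _ (tauP_mem_GammaP hj (mem_Icc_of_padP_eq_one h₀).2))
  have hB : ∀ p, 3 ≤ p → padP ζ (p - 1) = 0 → padP ζ p = 1 → padP ζ (p + 1) = 0 →
      padP ζ (p - 2) = 1 := by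
    intro p hp h₁ h₀ h₃
    by_contra h₂
    have hpm := (mem_Icc_of_padP_eq_one h₀).2
    exact (weight_tauP_tauP_lt (by omega) (ZMod.two_eq_zero_iff_ne_one.2 h₂) h₁ h₀ h₃).not_ge
      (hmin _ (mul_mem (tauP_mem_GammaP (by omega) hpm) (tauP_mem_GammaP (by omega) (by omega))))
  obtain ⟨T, hTm, h⟩ := exists_padP_eq_one_iff hA hB
  exact eq_normalForm_of_padP_eq_one_iff hTm h

lemma exists_mem_GammaP_apply_eq_normalForm (ζ : Fin m → ZMod 2) :
    ∃ γ ∈ GammaP m, γ ζ = normalForm m (padP ζ 1).val (blockCount ζ) := by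
  induction hw : weight ζ using Nat.strong_induction_on generalizing ζ with
  | _ n ih =>
    by_cases hmin : ∀ g ∈ GammaP m, weight ζ ≤ weight (g ζ)
    · exact ⟨1, one_mem _, (Equiv.Perm.one_apply ζ).trans (eq_normalForm_of_forall_weight_le hmin)⟩
    · push Not at hmin
      obtain ⟨g, hg, hlt⟩ := hmin
      obtain ⟨γ, hγ, hγg⟩ := ih _ (hw ▸ hlt) (g ζ) rfl
      refine ⟨γ * g, mul_mem hγ hg, ?_⟩
      rw [Equiv.Perm.mul_apply, hγg, blockCount_apply_of_mem_GammaP hg,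
        padP_one_apply_of_mem_GammaP hg]

theorem GammaP_orbit_normal_form_general (m : ℕ) (ζ : Fin m → ZMod 2) (k : ℕ)
    (hk : blockCount ζ = k) :
    (padP ζ 1 = 1 → ∃ γ ∈ GammaP m, γ ζ =
      fun p : Fin m => if ((p : ℕ) + 1) % 2 = 1 ∧ (p : ℕ) + 1 ≤ 2 * k - 1 then 1 else 0) ∧
    (padP ζ 1 = 0 → ∃ γ ∈ GammaP m, γ ζ =
      fun p : Fin m => if ((p : ℕ) + 1) % 2 = 0 ∧ (p : ℕ) + 1 ≤ 2 * k then 1 else 0) := by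
  obtain ⟨γ, hγ, hγζ⟩ := exists_mem_GammaP_apply_eq_normalForm ζ
  rw [hk] at hγζ
  exact ⟨fun h₁ => ⟨γ, hγ, by rw [hγζ, h₁]; rfl⟩, fun h₀ => ⟨γ, hγ, by rw [hγζ, h₀]; rfl⟩⟩

/-- If `c(ζ) = k` and `ζ_1 = 1` then some `γ ∈ Γ_P` maps `ζ` to the vector with 1's exactly
at positions `1, 3, …, 2k−1`; if `ζ_1 = 0`, to the vector with 1's exactly at positions
`2, 4, …, 2k`. (Positions are 1-indexed.) -/
theorem GammaP_orbit_normal_form (m : ℕ) (hm : 1 ≤ m) (ζ : Fin m → ZMod 2) (k : ℕ)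
    (hk : blockCount ζ = k) :
    (padP ζ 1 = 1 → ∃ γ ∈ GammaP m, γ ζ =
      fun p : Fin m => if ((p : ℕ) + 1) % 2 = 1 ∧ (p : ℕ) + 1 ≤ 2 * k - 1 then 1 else 0) ∧
    (padP ζ 1 = 0 → ∃ γ ∈ GammaP m, γ ζ =
      fun p : Fin m => if ((p : ℕ) + 1) % 2 = 0 ∧ (p : ℕ) + 1 ≤ 2 * k then 1 else 0) :=
  GammaP_orbit_normal_form_general m ζ k hk
end
end

section
/- Let m ≥ 1. The quadratic form Q_S is invariant under the Γ_S-action, i.e. Q_S(τ^S_j(ξ)) = Q_S(ξ) for every j ∈ {3, …, 2m} and every ξ ∈ 𝔽₂^{2m}. -/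
open scoped Classical

noncomputable section

/-- The `i`-th coordinate (1-indexed) of `ζ ∈ 𝔽₂^{2m}`, interpreted as `0` out of range. -/
def padS {m : ℕ} (ζ : Fin (2 * m) → ZMod 2) (i : ℕ) : ZMod 2 :=
  if h : 1 ≤ i ∧ i ≤ 2 * m then ζ ⟨i - 1, by omega⟩ else 0

/-- The transvection `τ^S_j(ζ) = ζ + (ζ_{j-2} + ζ_{j-1} + ζ_{j+1} + ζ_{j+2}) e_j`. -/
def tauS (m j : ℕ) (ζ : Fin (2 * m) → ZMod 2) : Fin (2 * m) → ZMod 2 :=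
  fun k => if (k : ℕ) + 1 = j then
    ζ k + (padS ζ (j - 2) + padS ζ (j - 1) + padS ζ (j + 1) + padS ζ (j + 2))
  else ζ k

/-- The group `Γ_S`, generated by the transvections `τ^S_j`, `3 ≤ j ≤ 2m`. -/
def GammaS (m : ℕ) : Subgroup (Equiv.Perm (Fin (2 * m) → ZMod 2)) :=
  Subgroup.closure {g | ∃ j, 3 ≤ j ∧ j ≤ 2 * m ∧ ⇑g = tauS m j}

/-- The quadratic form `Q_S(ξ) = Σ_i ξ_i + Σ_{{i,j} ∈ S(m)} ξ_i ξ_j`, where the edges of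
`S(m)` are `{2i, 2i+2}`, `{2i−1, 2i+1}`, `{2i+1, 2i+2}`, `{2i, 2i+1}` for `1 ≤ i ≤ m−1`. -/
def QS (m : ℕ) (ξ : Fin (2 * m) → ZMod 2) : ZMod 2 :=
  (∑ i ∈ Finset.Icc 1 (2 * m), padS ξ i) +
  (∑ i ∈ Finset.Icc 1 (m - 1),
    (padS ξ (2 * i) * padS ξ (2 * i + 2) + padS ξ (2 * i - 1) * padS ξ (2 * i + 1) +
     padS ξ (2 * i + 1) * padS ξ (2 * i + 2) + padS ξ (2 * i) * padS ξ (2 * i + 1)))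

lemma padS_out {m : ℕ} (ξ : Fin (2 * m) → ZMod 2) {i : ℕ} (h : ¬(1 ≤ i ∧ i ≤ 2 * m)) :
    padS ξ i = 0 := by rw [padS, dif_neg h]

set_option maxHeartbeats 1000000 in
/-- The quadratic form `Q_S` is invariant under the `Γ_S`-action:
`Q_S(τ^S_j ξ) = Q_S(ξ)` for every `j ∈ {3, …, 2m}`. -/
theorem QS_invariant (m : ℕ) (hm : 1 ≤ m) :
    ∀ j, 3 ≤ j → j ≤ 2 * m → ∀ ξ : Fin (2 * m) → ZMod 2, QS m (tauS m j ξ) = QS m ξ := by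
  intro j hj3 hjm ξ
  have hm2 : 2 ≤ m := by omega
  have hx : ∀ x : ZMod 2, x + x * x = 0 := by decide
  set c : ZMod 2 :=
    padS ξ (j - 2) + padS ξ (j - 1) + padS ξ (j + 1) + padS ξ (j + 2) with hc
  -- the key pointwise description of tauS
  have hpi : ∀ l, ∀ h : 1 ≤ l ∧ l ≤ 2 * m, padS ξ l = ξ ⟨l - 1, by omega⟩ := by
    intro l h
    rw [padS, dif_pos h]
  have hpad : ∀ i, padS (tauS m j ξ) i = padS ξ i + (if i = j then c else 0) := by
    intro i
    by_cases hir : 1 ≤ i ∧ i ≤ 2 * m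
    · have h1 : padS (tauS m j ξ) i = tauS m j ξ ⟨i - 1, by omega⟩ := by
        rw [padS, dif_pos hir]
      rw [h1]
      by_cases hij : i = j
      · have h2 : tauS m j ξ ⟨i - 1, by omega⟩ = ξ ⟨i - 1, by omega⟩ +
            (padS ξ (j - 2) + padS ξ (j - 1) + padS ξ (j + 1) + padS ξ (j + 2)) := by
          show (if i - 1 + 1 = j then _ else _) = _
          rw [if_pos (by omega : i - 1 + 1 = j)]
        rw [h2, if_pos hij, hpi i hir, hc]
      · have h2 : tauS m j ξ ⟨i - 1, by omega⟩ = ξ ⟨i - 1, by omega⟩ := by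
          show (if i - 1 + 1 = j then _ else _) = _
          rw [if_neg (by omega : ¬(i - 1 + 1 = j))]
        rw [h2, if_neg hij, hpi i hir, add_zero]
    · rw [padS_out _ hir, padS_out _ hir, if_neg (by omega), add_zero]
  -- linear part
  have hlin : (∑ i ∈ Finset.Icc 1 (2 * m), padS (tauS m j ξ) i)
      = (∑ i ∈ Finset.Icc 1 (2 * m), padS ξ i) + c := by
    simp only [hpad]
    rw [Finset.sum_add_distrib, Finset.sum_ite_eq' (Finset.Icc 1 (2 * m)) j (fun _ => c),
      if_pos (by rw [Finset.mem_Icc]; omega)]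
  -- quadratic per-term
  have hterm : ∀ i ∈ Finset.Icc 1 (m - 1),
      (padS (tauS m j ξ) (2 * i) * padS (tauS m j ξ) (2 * i + 2) +
       padS (tauS m j ξ) (2 * i - 1) * padS (tauS m j ξ) (2 * i + 1) +
       padS (tauS m j ξ) (2 * i + 1) * padS (tauS m j ξ) (2 * i + 2) +
       padS (tauS m j ξ) (2 * i) * padS (tauS m j ξ) (2 * i + 1)) =
      (padS ξ (2 * i) * padS ξ (2 * i + 2) + padS ξ (2 * i - 1) * padS ξ (2 * i + 1) +
       padS ξ (2 * i + 1) * padS ξ (2 * i + 2) + padS ξ (2 * i) * padS ξ (2 * i + 1)) +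
      ((if 2 * i = j then c * (padS ξ (2 * i + 1) + padS ξ (2 * i + 2)) else 0) +
       (if 2 * i + 2 = j then c * (padS ξ (2 * i) + padS ξ (2 * i + 1)) else 0) +
       (if 2 * i - 1 = j then c * padS ξ (2 * i + 1) else 0) +
       (if 2 * i + 1 = j then c * (padS ξ (2 * i - 1) + padS ξ (2 * i) + padS ξ (2 * i + 2)) else 0)) := by
    intro i hi
    rw [Finset.mem_Icc] at hi
    simp only [hpad]
    split_ifs <;> first | ring1 | (exfalso; omega)
  rw [QS, QS, hlin, Finset.sum_congr rfl hterm]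
  simp only [Finset.sum_add_distrib]
  rcases Nat.even_or_odd j with ⟨k, hk⟩ | ⟨k, hk⟩
  · -- j = k + k, even
    have hA : (∑ i ∈ Finset.Icc 1 (m - 1),
        if 2 * i = j then c * (padS ξ (2 * i + 1) + padS ξ (2 * i + 2)) else 0)
        = c * (padS ξ (j + 1) + padS ξ (j + 2)) := by
      have h1 : ∀ i, (if 2 * i = j then c * (padS ξ (2 * i + 1) + padS ξ (2 * i + 2)) else 0)
          = (if i = k then c * (padS ξ (2 * i + 1) + padS ξ (2 * i + 2)) else 0) := by
        intro i
        by_cases h : i = k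
        · subst h; rw [if_pos (by omega), if_pos rfl]
        · rw [if_neg (by omega), if_neg h]
      simp only [h1]
      rw [Finset.sum_ite_eq' (Finset.Icc 1 (m - 1)) k
        (fun i => c * (padS ξ (2 * i + 1) + padS ξ (2 * i + 2)))]
      by_cases h : k ∈ Finset.Icc 1 (m - 1)
      · rw [if_pos h, show 2 * k + 1 = j + 1 by omega, show 2 * k + 2 = j + 2 by omega]
      · rw [Finset.mem_Icc] at h
        rw [if_neg (by rw [Finset.mem_Icc]; omega),
          padS_out _ (by omega : ¬(1 ≤ j + 1 ∧ j + 1 ≤ 2 * m)),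
          padS_out _ (by omega : ¬(1 ≤ j + 2 ∧ j + 2 ≤ 2 * m))]
        ring
    have hB : (∑ i ∈ Finset.Icc 1 (m - 1),
        if 2 * i + 2 = j then c * (padS ξ (2 * i) + padS ξ (2 * i + 1)) else 0)
        = c * (padS ξ (j - 2) + padS ξ (j - 1)) := by
      have h1 : ∀ i, (if 2 * i + 2 = j then c * (padS ξ (2 * i) + padS ξ (2 * i + 1)) else 0)
          = (if i = k - 1 then c * (padS ξ (2 * i) + padS ξ (2 * i + 1)) else 0) := by
        intro i
        by_cases h : i = k - 1
        · subst h; rw [if_pos (by omega), if_pos rfl]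
        · rw [if_neg (by omega), if_neg h]
      simp only [h1]
      rw [Finset.sum_ite_eq' (Finset.Icc 1 (m - 1)) (k - 1)
        (fun i => c * (padS ξ (2 * i) + padS ξ (2 * i + 1))),
        if_pos (by rw [Finset.mem_Icc]; omega),
        show 2 * (k - 1) + 1 = j - 1 by omega, show 2 * (k - 1) = j - 2 by omega]
    have hC : (∑ i ∈ Finset.Icc 1 (m - 1),
        if 2 * i - 1 = j then c * padS ξ (2 * i + 1) else 0) = 0 :=
      Finset.sum_eq_zero (fun i _ => if_neg (by omega))
    have hD : (∑ i ∈ Finset.Icc 1 (m - 1),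
        if 2 * i + 1 = j then c * (padS ξ (2 * i - 1) + padS ξ (2 * i) + padS ξ (2 * i + 2)) else 0)
        = 0 :=
      Finset.sum_eq_zero (fun i _ => if_neg (by omega))
    rw [hA, hB, hC, hD]
    have h0 := hx (padS ξ (j - 2) + padS ξ (j - 1) + padS ξ (j + 1) + padS ξ (j + 2))
    rw [hc]
    linear_combination h0
  · -- j = 2k + 1, odd
    have hA : (∑ i ∈ Finset.Icc 1 (m - 1),
        if 2 * i = j then c * (padS ξ (2 * i + 1) + padS ξ (2 * i + 2)) else 0) = 0 :=
      Finset.sum_eq_zero (fun i _ => if_neg (by omega))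
    have hB : (∑ i ∈ Finset.Icc 1 (m - 1),
        if 2 * i + 2 = j then c * (padS ξ (2 * i) + padS ξ (2 * i + 1)) else 0) = 0 :=
      Finset.sum_eq_zero (fun i _ => if_neg (by omega))
    have hC : (∑ i ∈ Finset.Icc 1 (m - 1),
        if 2 * i - 1 = j then c * padS ξ (2 * i + 1) else 0)
        = c * padS ξ (j + 2) := by
      have h1 : ∀ i, (if 2 * i - 1 = j then c * padS ξ (2 * i + 1) else 0)
          = (if i = k + 1 then c * padS ξ (2 * i + 1) else 0) := by
        intro i
        by_cases h : i = k + 1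
        · subst h; rw [if_pos (by omega), if_pos rfl]
        · rw [if_neg (by omega), if_neg h]
      simp only [h1]
      rw [Finset.sum_ite_eq' (Finset.Icc 1 (m - 1)) (k + 1)
        (fun i => c * padS ξ (2 * i + 1))]
      by_cases h : k + 1 ∈ Finset.Icc 1 (m - 1)
      · rw [if_pos h, show 2 * (k + 1) + 1 = j + 2 by omega]
      · rw [Finset.mem_Icc] at h
        rw [if_neg (by rw [Finset.mem_Icc]; omega),
          padS_out _ (by omega : ¬(1 ≤ j + 2 ∧ j + 2 ≤ 2 * m))]
        ring
    have hD : (∑ i ∈ Finset.Icc 1 (m - 1),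
        if 2 * i + 1 = j then c * (padS ξ (2 * i - 1) + padS ξ (2 * i) + padS ξ (2 * i + 2)) else 0)
        = c * (padS ξ (j - 2) + padS ξ (j - 1) + padS ξ (j + 1)) := by
      have h1 : ∀ i, (if 2 * i + 1 = j then
            c * (padS ξ (2 * i - 1) + padS ξ (2 * i) + padS ξ (2 * i + 2)) else 0)
          = (if i = k then c * (padS ξ (2 * i - 1) + padS ξ (2 * i) + padS ξ (2 * i + 2)) else 0) := by
        intro i
        by_cases h : i = k
        · subst h; rw [if_pos (by omega), if_pos rfl]
        · rw [if_neg (by omega), if_neg h]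
      simp only [h1]
      rw [Finset.sum_ite_eq' (Finset.Icc 1 (m - 1)) k
        (fun i => c * (padS ξ (2 * i - 1) + padS ξ (2 * i) + padS ξ (2 * i + 2))),
        if_pos (by rw [Finset.mem_Icc]; omega),
        show 2 * k + 2 = j + 1 by omega, show 2 * k - 1 = j - 2 by omega,
        show 2 * k = j - 1 by omega]
    rw [hA, hB, hC, hD]
    have h0 := hx (padS ξ (j - 2) + padS ξ (j - 1) + padS ξ (j + 1) + padS ξ (j + 2))
    rw [hc]
    linear_combination h0
end
end
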